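/- Let d and r₂ be positive integers, k ∈ ℤ_{++}^{r₂}, and let R be the unique polynomial in ℂ[X] with R · ∏_{1≤i<j≤r₂+1}(X − d(i+j−3)/4)_{k_i+k_j} = (X)_{φ₁(k),d} · ∏_{1≤i<j≤r₂}(X − d(i+j−2)/4)_{k_i+k_j}. Suppose 2 ≤ m₁ ≤ m₂ ≤ r₂, k₂ = ⋯ = k_{m₁}, and k_{m₂+1} = 0 (convention k_{r₂+1} = 0). Then every zero λ ∈ ℂ of R is real and: if k₁ > k₂ > 0 then (d/4)(m₁−1) − (k₁+k₂) + 1 ≤ λ ≤ (d/4)(2m₂−3) − k_{m₂−1}; if k₁ = k₂ > 0 then (d/4)(2⌈m₁/2⌉−1) − (k₁+k₂) + 1 ≤ λ ≤ (d/4)(2m₂−3) − k_{m₂−1}; and if k₂ = 0 then R is the constant polynomial 1. Moreover, for m = 1, …, r₂−1, if φ₁(k)_{m+1} = 0 and φ₁(k)_m ≠ 0, then at λ = dm/2 the numerator ∏_{1≤i<j≤r₂}(λ − d(i+j−2)/4)_{k_i+k_j} and the denominator ∏_{1≤i<j≤r₂+1}(λ − d(i+j−3)/4)_{k_i+k_j}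 of C₁^{d,d/2} vanish to the same order (C₁^{d,d/2} is nonzero holomorphic there), while at λ = d(m−1)/2 the denominator vanishes to strictly higher order than the numerator (C₁^{d,d/2} has a pole there). -/

import Mathlib

/-!
Split the factors of the denominator into those with `j = i + 1` and those with `j ≥ i + 2`.
The former contain `(X)_{φ₁(k),d}`, with cofactor a product `diagQuot` of linear factors; the
latter, reindexed by `j ↦ j + 1`, divide the numerator because `k` is nonincreasing, with cofactor
the product `numerQuot` of the `X - (d(i+j-2)/4 - t)`, `k_i + k_{j+1} ≤ t < k_i + k_j`.
Hence `R * diagQuot = numerQuot`: the zeros of `R` are among these real numbers, and the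
constraints on `(i, j, t)` give the bounds. When `k₁ = k₂` and `m₁ = 2c + 1`, a zero below the
sharper bound can only come from `(i, j) = (1, m₁)`; it is then simple in `numerQuot` and also a
zero of `diagQuot` (from `a = c + 1`), so it is not a zero of `R`.
At `λ = dm/2` and `λ = d(m-1)/2` the cofactor `numerQuot` does not vanish, while the factors with
`j = i + 1` vanish only at `d(m-1)/2`, and there simply.
-/

open Polynomial Finset

/-- `(X - c)_m := ∏_{t=0}^{m-1} (X - c + t)` in `ℂ[X]`. -/
noncomputable def pochPoly (c : ℂ) (m : ℕ) : Polynomial ℂ :=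
  ∏ t ∈ Finset.range m, (Polynomial.X - Polynomial.C c + (t : Polynomial ℂ))

/-- `φ₁(k)_a := min{k_i + k_j : 1 ≤ i < j ≤ r₂+1, i+j = 2a+1}`. -/
noncomputable def phi1 (r₂ : ℕ) (k : ℕ → ℕ) (a : ℕ) : ℕ :=
  sInf {m : ℕ | ∃ i j : ℕ, 1 ≤ i ∧ i < j ∧ j ≤ r₂ + 1 ∧ i + j = 2 * a + 1 ∧
    m = k i + k j}

/-- The denominator `∏_{1≤i<j≤r₂+1}(X − d(i+j−3)/4)_{k_i+k_j}` of `C₁^{d,d/2}`. -/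
noncomputable def denom1 (d r₂ : ℕ) (k : ℕ → ℕ) : Polynomial ℂ :=
  ∏ i ∈ Finset.Icc 1 (r₂ + 1), ∏ j ∈ Finset.Icc (i + 1) (r₂ + 1),
    pochPoly ((d : ℂ) * ((i : ℂ) + (j : ℂ) - 3) / 4) (k i + k j)

/-- The numerator `∏_{1≤i<j≤r₂}(X − d(i+j−2)/4)_{k_i+k_j}` of `C₁^{d,d/2}`. -/
noncomputable def numer1 (d r₂ : ℕ) (k : ℕ → ℕ) : Polynomial ℂ :=
  ∏ i ∈ Finset.Icc 1 r₂, ∏ j ∈ Finset.Icc (i + 1) r₂,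
    pochPoly ((d : ℂ) * ((i : ℂ) + (j : ℂ) - 2) / 4) (k i + k j)

/-- The polynomial `(X)_{φ₁(k),d} = ∏_{a=1}^{r₂}(X − d(a−1)/2)_{φ₁(k)_a}`. -/
noncomputable def phiPoly1 (d r₂ : ℕ) (k : ℕ → ℕ) : Polynomial ℂ :=
  ∏ a ∈ Finset.Icc 1 r₂,
    pochPoly ((d : ℂ) * ((a : ℂ) - 1) / 2) (phi1 r₂ k a)

theorem Polynomial.rootMultiplicity_prod_X_sub_C {R ι : Type*} [CommRing R] [IsDomain R]
    [DecidableEq R] (s : Finset ι) (f : ι → R) (z : R) :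
    rootMultiplicity z (∏ i ∈ s, (X - C (f i))) = #{i ∈ s | f i = z} := by
  have : ∏ i ∈ s, (X - C (f i)) = ((s.val.map f).map fun a => X - C a).prod := by
    rw [Multiset.map_map]; rfl
  rw [← count_roots, this, roots_multiset_prod_X_sub_C, Multiset.count_map, card_def, filter_val]
  simp only [eq_comm]

lemma lt_of_antitoneOn_of_pos {α : Type*} [LinearOrder α] {s : Set α} {k : α → ℕ} {j M : α}
    (hk : AntitoneOn k s) (hj : j ∈ s) (hM : M ∈ s) (hkM : k M = 0) (hpos : 0 < k j) : j < M := by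
  by_contra h
  have := hk hM hj (not_lt.mp h)
  omega

lemma pochPoly_eq_prod (c : ℂ) (n : ℕ) : pochPoly c n = ∏ t ∈ range n, (X - C (c - t)) :=
  prod_congr rfl fun t _ => by rw [C_sub, map_natCast]; ring

lemma pochPoly_ne_zero (c : ℂ) (n : ℕ) : pochPoly c n ≠ 0 := by
  rw [pochPoly_eq_prod]
  exact prod_ne_zero_iff.mpr fun t _ => X_sub_C_ne_zero _

lemma pochPoly_mul_prod_Ico (c : ℂ) {m n : ℕ} (h : m ≤ n) :
    pochPoly c m * ∏ t ∈ Ico m n, (X - C (c - t)) = pochPoly c n := by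
  simp only [pochPoly_eq_prod]
  exact prod_range_mul_prod_Ico _ h

section phi1

variable {r₂ a : ℕ} (k : ℕ → ℕ)

lemma phi1_le {i j : ℕ} (hi : 1 ≤ i) (hij : i < j) (hj : j ≤ r₂ + 1) (h : i + j = 2 * a + 1) :
    phi1 r₂ k a ≤ k i + k j :=
  Nat.sInf_le ⟨i, j, hi, hij, hj, h, rfl⟩

lemma exists_phi1_eq (ha : 1 ≤ a) (har : a ≤ r₂) : ∃ i j, 1 ≤ i ∧ i < j ∧ j ≤ r₂ + 1 ∧
    i + j = 2 * a + 1 ∧ phi1 r₂ k a = k i + k j := by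
  have hne : {m : ℕ | ∃ i j : ℕ, 1 ≤ i ∧ i < j ∧ j ≤ r₂ + 1 ∧ i + j = 2 * a + 1 ∧
      m = k i + k j}.Nonempty := ⟨_, a, a + 1, ha, by omega, by omega, by omega, rfl⟩
  exact Nat.sInf_mem hne

lemma phi1_one (hr : 1 ≤ r₂) : phi1 r₂ k 1 = k 1 + k 2 := by
  obtain ⟨i, j, hi, hij, -, hs, h⟩ := exists_phi1_eq k le_rfl hr
  obtain ⟨rfl, rfl⟩ : i = 1 ∧ j = 2 := by omega
  exact h

end phi1

noncomputable def diagPoly (d r₂ : ℕ) (k : ℕ → ℕ) : ℂ[X] :=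
  ∏ a ∈ Icc 1 r₂, pochPoly ((d : ℂ) * ((a : ℂ) - 1) / 2) (k a + k (a + 1))

noncomputable def offDiagPoly (d r₂ : ℕ) (k : ℕ → ℕ) : ℂ[X] :=
  ∏ i ∈ Icc 1 r₂, ∏ j ∈ Icc (i + 1) r₂,
    pochPoly ((d : ℂ) * ((i : ℂ) + (j : ℂ) - 2) / 4) (k i + k (j + 1))

def numerQuotIdx (r₂ : ℕ) (k : ℕ → ℕ) : Finset (Σ _ : ℕ, Σ _ : ℕ, ℕ) :=
  (Icc 1 r₂).sigma fun i => (Icc (i + 1) r₂).sigma fun j => Ico (k i + k (j + 1)) (k i + k j)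

noncomputable def numerRoot (d : ℕ) (p : Σ _ : ℕ, Σ _ : ℕ, ℕ) : ℝ :=
  d * ((p.1 : ℝ) + p.2.1 - 2) / 4 - p.2.2

noncomputable def numerQuot (d r₂ : ℕ) (k : ℕ → ℕ) : ℂ[X] :=
  ∏ p ∈ numerQuotIdx r₂ k, (X - C (numerRoot d p : ℂ))

def diagIdx (r₂ : ℕ) (k : ℕ → ℕ) : Finset (Σ _ : ℕ, ℕ) :=
  (Icc 1 r₂).sigma fun a => range (k a + k (a + 1))

noncomputable def diagQuotIdx (r₂ : ℕ) (k : ℕ → ℕ) : Finset (Σ _ : ℕ, ℕ) :=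
  (Icc 1 r₂).sigma fun a => Ico (phi1 r₂ k a) (k a + k (a + 1))

noncomputable def diagRoot (d : ℕ) (p : Σ _ : ℕ, ℕ) : ℝ := d * ((p.1 : ℝ) - 1) / 2 - p.2

noncomputable def diagQuot (d r₂ : ℕ) (k : ℕ → ℕ) : ℂ[X] :=
  ∏ p ∈ diagQuotIdx r₂ k, (X - C (diagRoot d p : ℂ))

section

variable {d r₂ : ℕ} {k : ℕ → ℕ}

@[simp]
lemma mem_numerQuotIdx {i j t : ℕ} : (⟨i, j, t⟩ : Σ _ : ℕ, Σ _ : ℕ, ℕ) ∈ numerQuotIdx r₂ k ↔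
    1 ≤ i ∧ i < j ∧ j ≤ r₂ ∧ k i + k (j + 1) ≤ t ∧ t < k i + k j := by
  simp only [numerQuotIdx, mem_sigma, mem_Icc, mem_Ico]
  omega

@[simp]
lemma mem_diagIdx {a t : ℕ} : (⟨a, t⟩ : Σ _ : ℕ, ℕ) ∈ diagIdx r₂ k ↔
    1 ≤ a ∧ a ≤ r₂ ∧ t < k a + k (a + 1) := by
  simp only [diagIdx, mem_sigma, mem_Icc, mem_range, and_assoc]

@[simp]
lemma mem_diagQuotIdx {a t : ℕ} : (⟨a, t⟩ : Σ _ : ℕ, ℕ) ∈ diagQuotIdx r₂ k ↔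
    1 ≤ a ∧ a ≤ r₂ ∧ phi1 r₂ k a ≤ t ∧ t < k a + k (a + 1) := by
  simp only [diagQuotIdx, mem_sigma, mem_Icc, mem_Ico, and_assoc]

lemma denom1_ne_zero (d r₂ : ℕ) (k : ℕ → ℕ) : denom1 d r₂ k ≠ 0 :=
  prod_ne_zero_iff.mpr fun _ _ => prod_ne_zero_iff.mpr fun _ _ => pochPoly_ne_zero _ _

lemma numerQuot_ne_zero (d r₂ : ℕ) (k : ℕ → ℕ) : numerQuot d r₂ k ≠ 0 :=
  prod_ne_zero_iff.mpr fun _ _ => X_sub_C_ne_zero _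

lemma diagPoly_eq_prod (d r₂ : ℕ) (k : ℕ → ℕ) :
    diagPoly d r₂ k = ∏ p ∈ diagIdx r₂ k, (X - C (diagRoot d p : ℂ)) := by
  rw [diagIdx, prod_sigma, diagPoly]
  refine prod_congr rfl fun a _ => ?_
  rw [pochPoly_eq_prod]
  push_cast [diagRoot]
  rfl

lemma denom1_eq_diagPoly_mul_offDiagPoly (d r₂ : ℕ) (k : ℕ → ℕ) :
    denom1 d r₂ k = diagPoly d r₂ k * offDiagPoly d r₂ k := by
  rw [denom1, prod_Icc_succ_top (by omega), Icc_eq_empty_of_lt (Nat.lt_succ_self (r₂ + 1)),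
    prod_empty, mul_one, diagPoly, offDiagPoly, ← prod_mul_distrib]
  refine prod_congr rfl fun i hi => ?_
  rw [← mul_prod_Ioc_eq_prod_Icc (by rw [mem_Icc] at hi; omega), ← Icc_add_one_left_eq_Ioc,
    ← map_add_right_Icc (i + 1) r₂ 1, prod_map]
  congr 1
  · congr 1
    push_cast
    ring
  · refine prod_congr rfl fun j _ => ?_
    simp only [addRightEmbedding_apply]
    congr 1
    push_cast
    ring

lemma offDiagPoly_mul_numerQuot (hk : AntitoneOn k (Set.Icc 1 (r₂ + 1))) :
    offDiagPoly d r₂ k * numerQuot d r₂ k = numer1 d r₂ k := by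
  rw [numerQuot, numerQuotIdx, prod_sigma, offDiagPoly, numer1, ← prod_mul_distrib]
  refine prod_congr rfl fun i hi => ?_
  rw [prod_sigma, ← prod_mul_distrib]
  refine prod_congr rfl fun j hj => ?_
  simp only [mem_Icc] at hi hj
  have hkj : k (j + 1) ≤ k j := hk ⟨by omega, by omega⟩ ⟨by omega, by omega⟩ (Nat.le_succ j)
  convert pochPoly_mul_prod_Ico _ (Nat.add_le_add_left hkj (k i)) using 3
  push_cast [numerRoot]
  rfl

lemma phiPoly1_mul_diagQuot (d r₂ : ℕ) (k : ℕ → ℕ) :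
    phiPoly1 d r₂ k * diagQuot d r₂ k = diagPoly d r₂ k := by
  rw [diagQuot, diagQuotIdx, prod_sigma, phiPoly1, diagPoly, ← prod_mul_distrib]
  refine prod_congr rfl fun a ha => ?_
  simp only [mem_Icc] at ha
  have hφ : phi1 r₂ k a ≤ k a + k (a + 1) := phi1_le k ha.1 (lt_add_one a) (by omega) (by ring)
  convert pochPoly_mul_prod_Ico _ hφ using 3
  push_cast [diagRoot]
  rfl

lemma denom1_mul_numerQuot (hk : AntitoneOn k (Set.Icc 1 (r₂ + 1))) :
    denom1 d r₂ k * numerQuot d r₂ k = diagPoly d r₂ k * numer1 d r₂ k := by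
  rw [denom1_eq_diagPoly_mul_offDiagPoly, mul_assoc, offDiagPoly_mul_numerQuot hk]

lemma mul_diagQuot_eq_numerQuot (hk : AntitoneOn k (Set.Icc 1 (r₂ + 1))) {R : ℂ[X]}
    (hR : R * denom1 d r₂ k = phiPoly1 d r₂ k * numer1 d r₂ k) :
    R * diagQuot d r₂ k = numerQuot d r₂ k := by
  apply mul_left_cancel₀ (denom1_ne_zero d r₂ k)
  calc denom1 d r₂ k * (R * diagQuot d r₂ k)
      = numer1 d r₂ k * (phiPoly1 d r₂ k * diagQuot d r₂ k) := by
        rw [← mul_assoc, mul_comm _ R, hR]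
        ring
    _ = denom1 d r₂ k * numerQuot d r₂ k := by
      rw [phiPoly1_mul_diagQuot, denom1_mul_numerQuot hk, mul_comm]

lemma eq_zero_of_phi1_eq_zero {a : ℕ} (hk : AntitoneOn k (Set.Icc 1 (r₂ + 1)))
    (ha : 1 ≤ a) (har : a ≤ r₂) (h : phi1 r₂ k a = 0) : k a = 0 := by
  obtain ⟨i, j, hi, hij, hj, hs, hij0⟩ := exists_phi1_eq k ha har
  have : k a ≤ k i := hk ⟨hi, by omega⟩ ⟨ha, by omega⟩ (by omega)
  omega

lemma exists_eq_numerRoot_of_isRoot {R : ℂ[X]} (hRD : R * diagQuot d r₂ k = numerQuot d r₂ k)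
    {z : ℂ} (hz : R.IsRoot z) : ∃ p ∈ numerQuotIdx r₂ k, (numerRoot d p : ℂ) = z := by
  have : (numerQuot d r₂ k).IsRoot z := by rw [← hRD, IsRoot, eval_mul, hz.eq_zero, zero_mul]
  simpa only [numerQuot, isRoot_prod, root_X_sub_C] using this

lemma le_snd_of_mem_numerQuotIdx {m₁ : ℕ} (hkc : ∀ a, 2 ≤ a → a ≤ m₁ → k a = k 2)
    {i j t : ℕ} (hp : ⟨i, j, t⟩ ∈ numerQuotIdx r₂ k) : m₁ ≤ j := by
  rw [mem_numerQuotIdx] at hp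
  by_contra h
  have := hkc j (by omega) (by omega)
  have := hkc (j + 1) (by omega) (by omega)
  omega

lemma snd_le_of_mem_numerQuotIdx (hk : AntitoneOn k (Set.Icc 1 (r₂ + 1))) {M : ℕ}
    (hM : M ≤ r₂) (hkM : k (M + 1) = 0) {i j t : ℕ} (hp : ⟨i, j, t⟩ ∈ numerQuotIdx r₂ k) :
    j ≤ M := by
  rw [mem_numerQuotIdx] at hp
  exact Nat.le_of_lt_succ <|
    lt_of_antitoneOn_of_pos hk ⟨by omega, by omega⟩ ⟨by omega, by omega⟩ hkM (by omega)

lemma le_numerRoot (hk : AntitoneOn k (Set.Icc 1 (r₂ + 1))) {n i j t : ℕ}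
    (hp : ⟨i, j, t⟩ ∈ numerQuotIdx r₂ k) (hn : n + 1 ≤ i + j) :
    (d : ℝ) / 4 * ((n : ℝ) - 1) - ((k 1 : ℝ) + k 2) + 1 ≤ numerRoot d ⟨i, j, t⟩ := by
  rw [mem_numerQuotIdx] at hp
  have hk1 : k i ≤ k 1 := hk ⟨le_rfl, by omega⟩ ⟨hp.1, by omega⟩ hp.1
  have hk2 : k j ≤ k 2 := hk ⟨by omega, by omega⟩ ⟨by omega, by omega⟩ (by omega)
  have ht : (t : ℝ) + 1 ≤ k 1 + k 2 := by exact_mod_cast (by omega : t + 1 ≤ k 1 + k 2)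
  have hij : (n : ℝ) + 1 ≤ i + j := by exact_mod_cast hn
  have := mul_le_mul_of_nonneg_left hij (Nat.cast_nonneg (α := ℝ) d)
  rw [numerRoot]
  linarith

lemma numerRoot_le (hk : AntitoneOn k (Set.Icc 1 (r₂ + 1))) {M : ℕ} (hM : M ≤ r₂)
    (hkM : k (M + 1) = 0) {i j t : ℕ} (hp : ⟨i, j, t⟩ ∈ numerQuotIdx r₂ k) :
    numerRoot d ⟨i, j, t⟩ ≤ (d : ℝ) / 4 * (2 * (M : ℝ) - 3) - k (M - 1) := by
  have hjM := snd_le_of_mem_numerQuotIdx hk hM hkM hp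
  rw [mem_numerQuotIdx] at hp
  have hki : k (M - 1) ≤ k i := hk ⟨hp.1, by omega⟩ ⟨by omega, by omega⟩ (by omega)
  have ht : (k (M - 1) : ℝ) ≤ t := by exact_mod_cast (by omega : k (M - 1) ≤ t)
  have hij : (i : ℝ) + j + 1 ≤ 2 * M := by exact_mod_cast (by omega : i + j + 1 ≤ 2 * M)
  have := mul_le_mul_of_nonneg_left hij (Nat.cast_nonneg (α := ℝ) d)
  rw [numerRoot]
  linarith

lemma fst_le_of_mem_diagIdx (hk : AntitoneOn k (Set.Icc 1 (r₂ + 1))) {m : ℕ} (hm : m ≤ r₂)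
    (hkm : k (m + 1) = 0) {a t : ℕ} (hp : ⟨a, t⟩ ∈ diagIdx r₂ k) : a ≤ m := by
  rw [mem_diagIdx] at hp
  have : k (a + 1) ≤ k a := hk ⟨hp.1, by omega⟩ ⟨by omega, by omega⟩ (by omega)
  have := lt_of_antitoneOn_of_pos hk ⟨hp.1, by omega⟩ ⟨by omega, by omega⟩ hkm (by omega)
  omega

lemma diagRoot_le (hk : AntitoneOn k (Set.Icc 1 (r₂ + 1))) {m : ℕ} (hm : m ≤ r₂)
    (hkm : k (m + 1) = 0) {a t : ℕ} (hp : ⟨a, t⟩ ∈ diagIdx r₂ k) :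
    diagRoot d ⟨a, t⟩ ≤ d * ((m : ℝ) - 1) / 2 := by
  have ha : (a : ℝ) ≤ m := by exact_mod_cast fst_le_of_mem_diagIdx hk hm hkm hp
  have := mul_le_mul_of_nonneg_left ha (Nat.cast_nonneg (α := ℝ) d)
  rw [diagRoot]
  linarith [(t.cast_nonneg : (0 : ℝ) ≤ t)]

lemma eq_of_diagRoot_eq (hd : 0 < d) (hk : AntitoneOn k (Set.Icc 1 (r₂ + 1))) {m : ℕ}
    (hm : m ≤ r₂) (hkm : k (m + 1) = 0) {a t : ℕ} (hp : ⟨a, t⟩ ∈ diagIdx r₂ k)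
    (h : diagRoot d ⟨a, t⟩ = d * ((m : ℝ) - 1) / 2) : a = m ∧ t = 0 := by
  have ha : a ≤ m := fst_le_of_mem_diagIdx hk hm hkm hp
  have hd' : (1 : ℝ) ≤ d := by exact_mod_cast hd
  rw [diagRoot] at h
  obtain rfl : a = m := by
    by_contra hne
    have : (a : ℝ) + 1 ≤ m := by exact_mod_cast (by omega : a + 1 ≤ m)
    nlinarith [(t.cast_nonneg : (0 : ℝ) ≤ t)]
  exact ⟨rfl, by exact_mod_cast (by linarith : (t : ℝ) = 0)⟩

lemma numerQuotIdx_eq_empty (hk : AntitoneOn k (Set.Icc 1 (r₂ + 1))) (h2 : k 2 = 0) :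
    numerQuotIdx r₂ k = ∅ := by
  refine eq_empty_of_forall_notMem fun ⟨i, j, t⟩ hp => ?_
  have hr : 1 ≤ r₂ := by rw [mem_numerQuotIdx] at hp; omega
  have := snd_le_of_mem_numerQuotIdx hk hr h2 hp
  rw [mem_numerQuotIdx] at hp
  omega

lemma diagQuotIdx_eq_empty (hk : AntitoneOn k (Set.Icc 1 (r₂ + 1))) (h2 : k 2 = 0) :
    diagQuotIdx r₂ k = ∅ := by
  refine eq_empty_of_forall_notMem fun ⟨a, t⟩ hp => ?_
  rw [mem_diagQuotIdx] at hp
  obtain ⟨ha, har, hφ, ht⟩ := hp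
  obtain rfl | ha := eq_or_lt_of_le ha
  · rw [phi1_one k har] at hφ
    change t < k 1 + k 2 at ht
    omega
  · have := fst_le_of_mem_diagIdx hk (by omega) h2 (mem_diagIdx.mpr ⟨ha.le, har, ht⟩)
    omega

lemma rootMultiplicity_numerQuot_le_one {x : ℝ} {i j : ℕ} (h : ∀ i' j' t',
      ⟨i', j', t'⟩ ∈ numerQuotIdx r₂ k → numerRoot d ⟨i', j', t'⟩ = x → i' = i ∧ j' = j) :
    rootMultiplicity (x : ℂ) (numerQuot d r₂ k) ≤ 1 := by
  rw [numerQuot, rootMultiplicity_prod_X_sub_C]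
  refine card_le_one.mpr fun ⟨i₁, j₁, t₁⟩ h₁ ⟨i₂, j₂, t₂⟩ h₂ => ?_
  simp only [mem_filter, Complex.ofReal_inj] at h₁ h₂
  obtain ⟨rfl, rfl⟩ := h _ _ _ h₁.1 h₁.2
  obtain ⟨rfl, rfl⟩ := h _ _ _ h₂.1 h₂.2
  have : (t₁ : ℝ) = t₂ := by
    have := h₁.2.trans h₂.2.symm
    simp only [numerRoot] at this
    linarith
  rw [Nat.cast_inj.mp this]

lemma le_numerRoot_of_isRoot (hk : AntitoneOn k (Set.Icc 1 (r₂ + 1))) {m₁ c : ℕ}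
    (hkc : ∀ a, 2 ≤ a → a ≤ m₁ → k a = k 2) (hk12 : k 1 = k 2) (hm₁ : m₁ = 2 * c + 1)
    (hc : 1 ≤ c) (hr : m₁ ≤ r₂) {R : ℂ[X]} (hRD : R * diagQuot d r₂ k = numerQuot d r₂ k)
    {i j t : ℕ} (hp : ⟨i, j, t⟩ ∈ numerQuotIdx r₂ k) (hz : R.IsRoot (numerRoot d ⟨i, j, t⟩)) :
    (d : ℝ) / 4 * m₁ - ((k 1 : ℝ) + k 2) + 1 ≤ numerRoot d ⟨i, j, t⟩ := by
  by_contra! hlt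
  have hforce : ∀ i' j' t', ⟨i', j', t'⟩ ∈ numerQuotIdx r₂ k →
      numerRoot d ⟨i', j', t'⟩ = numerRoot d ⟨i, j, t⟩ → i' = 1 ∧ j' = m₁ := by
    intro i' j' t' hq hqp
    have := le_snd_of_mem_numerQuotIdx hkc hq
    by_contra hne
    have := le_numerRoot (d := d) (n := m₁ + 1) hk hq (by rw [mem_numerQuotIdx] at hq; omega)
    push_cast at this
    linarith
  obtain ⟨rfl, hj⟩ := hforce _ _ _ hp rfl
  subst j
  have hNQ := rootMultiplicity_numerQuot_le_one hforce
  have hDQ : (diagQuot d r₂ k).IsRoot (numerRoot d ⟨1, m₁, t⟩) := by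
    rw [diagQuot, isRoot_prod]
    refine ⟨⟨c + 1, t⟩, ?_, ?_⟩
    · have := phi1_le (r₂ := r₂) (a := c + 1) k le_rfl (by omega : 1 < m₁ + 1) (by omega)
        (by omega)
      have := hkc (c + 1) (by omega) (by omega)
      have := hkc (c + 1 + 1) (by omega) (by omega)
      have := hkc m₁ (by omega) le_rfl
      rw [mem_numerQuotIdx] at hp
      rw [mem_diagQuotIdx]
      omega
    · rw [root_X_sub_C, Complex.ofReal_inj, diagRoot, numerRoot, hm₁]
      push_cast
      ring
  have hne : R * diagQuot d r₂ k ≠ 0 := hRD ▸ numerQuot_ne_zero d r₂ k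
  have hmul := rootMultiplicity_mul (x := (numerRoot d ⟨1, m₁, t⟩ : ℂ)) hne
  have hR := (rootMultiplicity_pos (left_ne_zero_of_mul hne)).mpr hz
  have hD := (rootMultiplicity_pos (right_ne_zero_of_mul hne)).mpr hDQ
  rw [hRD] at hmul
  omega

lemma rootMultiplicity_numerQuot_eq_zero (hd : 0 < d) (hk : AntitoneOn k (Set.Icc 1 (r₂ + 1)))
    {m : ℕ} (hmr : m ≤ r₂) (hkm : k (m + 1) = 0) {x : ℝ} (hx : d * ((m : ℝ) - 1) / 2 ≤ x) :
    rootMultiplicity (x : ℂ) (numerQuot d r₂ k) = 0 := by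
  rw [numerQuot, rootMultiplicity_prod_X_sub_C, card_eq_zero, filter_eq_empty_iff]
  rintro ⟨i, j, t⟩ hp h
  have := numerRoot_le (d := d) hk hmr hkm hp
  have hd' : (1 : ℝ) ≤ d := by exact_mod_cast hd
  rw [Complex.ofReal_inj] at h
  linarith [((k (m - 1)).cast_nonneg : (0 : ℝ) ≤ k (m - 1))]

lemma rootMultiplicity_diagPoly (hd : 0 < d) (hk : AntitoneOn k (Set.Icc 1 (r₂ + 1))) {m : ℕ}
    (hm : 1 ≤ m) (hmr : m ≤ r₂) (hkm : 0 < k m) (hkm1 : k (m + 1) = 0) {x : ℝ}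
    (hx : d * ((m : ℝ) - 1) / 2 ≤ x) :
    rootMultiplicity (x : ℂ) (diagPoly d r₂ k) = if x = d * ((m : ℝ) - 1) / 2 then 1 else 0 := by
  rw [diagPoly_eq_prod, rootMultiplicity_prod_X_sub_C]
  simp only [Complex.ofReal_inj]
  split_ifs with hxm
  · subst hxm
    refine card_eq_one.mpr ⟨⟨m, 0⟩, eq_singleton_iff_unique_mem.mpr ⟨?_, ?_⟩⟩
    · exact mem_filter.mpr ⟨mem_diagIdx.mpr ⟨hm, hmr, by omega⟩, by simp [diagRoot]⟩
    · rintro ⟨a, t⟩ h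
      rw [mem_filter] at h
      obtain ⟨rfl, rfl⟩ := eq_of_diagRoot_eq hd hk hmr hkm1 h.1 h.2
      rfl
  · rw [card_eq_zero, filter_eq_empty_iff]
    rintro ⟨a, t⟩ hp h
    exact hxm (le_antisymm (h ▸ diagRoot_le hk hmr hkm1 hp) hx)

lemma rootMultiplicity_numer1_denom1 (hd : 0 < d) (hk : AntitoneOn k (Set.Icc 1 (r₂ + 1)))
    {m : ℕ} (hm : 1 ≤ m) (hmr : m ≤ r₂) (hkm : 0 < k m) (hkm1 : k (m + 1) = 0) :
    rootMultiplicity ((d : ℂ) * (m : ℂ) / 2) (numer1 d r₂ k) =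
        rootMultiplicity ((d : ℂ) * (m : ℂ) / 2) (denom1 d r₂ k) ∧
      rootMultiplicity ((d : ℂ) * ((m : ℂ) - 1) / 2) (numer1 d r₂ k) <
        rootMultiplicity ((d : ℂ) * ((m : ℂ) - 1) / 2) (denom1 d r₂ k) := by
  have hne : denom1 d r₂ k * numerQuot d r₂ k ≠ 0 :=
    mul_ne_zero (denom1_ne_zero d r₂ k) (numerQuot_ne_zero d r₂ k)
  have hadd (x : ℝ) (hx : d * ((m : ℝ) - 1) / 2 ≤ x) :
      rootMultiplicity (x : ℂ) (denom1 d r₂ k) = (if x = d * ((m : ℝ) - 1) / 2 then 1 else 0) +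
        rootMultiplicity (x : ℂ) (numer1 d r₂ k) := by
    have := rootMultiplicity_mul (x := (x : ℂ)) hne
    rw [denom1_mul_numerQuot hk, rootMultiplicity_mul (denom1_mul_numerQuot hk ▸ hne),
      rootMultiplicity_numerQuot_eq_zero hd hk hmr hkm1 hx,
      rootMultiplicity_diagPoly hd hk hm hmr hkm hkm1 hx] at this
    omega
  have hd' : (0 : ℝ) < d := by exact_mod_cast hd
  constructor
  · have := hadd (d * m / 2) (by linarith)
    rw [if_neg (by linarith)] at this
    push_cast at this
    omega
  · have := hadd (d * ((m : ℝ) - 1) / 2) le_rfl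
    rw [if_pos rfl] at this
    push_cast at this
    omega

end

theorem zeroes_simple₁_general (d r₂ : ℕ) (hd : 0 < d)
    (k : ℕ → ℕ) (hk : ∀ i j, 1 ≤ i → i ≤ j → j ≤ r₂ → k j ≤ k i)
    (hk0 : k (r₂ + 1) = 0)
    (m₁ m₂ : ℕ) (hm1 : 2 ≤ m₁) (hm2 : m₁ ≤ m₂) (hm3 : m₂ ≤ r₂)
    (hkc : ∀ a, 2 ≤ a → a ≤ m₁ → k a = k 2) (hk2 : k (m₂ + 1) = 0)
    (R : Polynomial ℂ)
    (hR : R * denom1 d r₂ k = phiPoly1 d r₂ k * numer1 d r₂ k) :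
    ((k 2 < k 1 → 0 < k 2 → ∀ z : ℂ, R.IsRoot z → z.im = 0 ∧
        (d : ℝ) / 4 * ((m₁ : ℝ) - 1) - ((k 1 : ℝ) + (k 2 : ℝ)) + 1 ≤ z.re ∧
        z.re ≤ (d : ℝ) / 4 * (2 * (m₂ : ℝ) - 3) - (k (m₂ - 1) : ℝ)) ∧
      (k 1 = k 2 → 0 < k 2 → ∀ z : ℂ, R.IsRoot z → z.im = 0 ∧
        (d : ℝ) / 4 * (2 * (((m₁ + 1) / 2 : ℕ) : ℝ) - 1) - ((k 1 : ℝ) + (k 2 : ℝ)) + 1 ≤ z.re ∧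
        z.re ≤ (d : ℝ) / 4 * (2 * (m₂ : ℝ) - 3) - (k (m₂ - 1) : ℝ)) ∧
      (k 2 = 0 → R = 1)) ∧
    ∀ m : ℕ, 1 ≤ m → m ≤ r₂ - 1 →
      phi1 r₂ k (m + 1) = 0 → phi1 r₂ k m ≠ 0 →
      (Polynomial.rootMultiplicity ((d : ℂ) * (m : ℂ) / 2) (numer1 d r₂ k) =
        Polynomial.rootMultiplicity ((d : ℂ) * (m : ℂ) / 2) (denom1 d r₂ k) ∧
       Polynomial.rootMultiplicity ((d : ℂ) * ((m : ℂ) - 1) / 2) (numer1 d r₂ k) <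
        Polynomial.rootMultiplicity ((d : ℂ) * ((m : ℂ) - 1) / 2) (denom1 d r₂ k)) := by
  have hk' : AntitoneOn k (Set.Icc 1 (r₂ + 1)) := fun i hi j hj hij => by
    rcases hj.2.lt_or_eq with hj' | rfl
    · exact hk i j hi.1 hij (by omega)
    · simp [hk0]
  have hRD := mul_diagQuot_eq_numerQuot hk' hR
  refine ⟨⟨fun _ _ z hz => ?_, fun hk12 _ z hz => ?_, fun h2 => ?_⟩, fun m hm hmr hφ hφ' => ?_⟩
  · obtain ⟨⟨i, j, t⟩, hp, rfl⟩ := exists_eq_numerRoot_of_isRoot hRD hz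
    have hj := le_snd_of_mem_numerQuotIdx hkc hp
    simp only [Complex.ofReal_im, Complex.ofReal_re]
    exact ⟨trivial, le_numerRoot hk' hp (by rw [mem_numerQuotIdx] at hp; omega),
      numerRoot_le hk' hm3 hk2 hp⟩
  · obtain ⟨⟨i, j, t⟩, hp, rfl⟩ := exists_eq_numerRoot_of_isRoot hRD hz
    have hj := le_snd_of_mem_numerQuotIdx hkc hp
    simp only [Complex.ofReal_im, Complex.ofReal_re]
    refine ⟨trivial, ?_, numerRoot_le hk' hm3 hk2 hp⟩
    rcases Nat.even_or_odd' m₁ with ⟨c, rfl | rfl⟩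
    · have := le_numerRoot (d := d) (n := 2 * c) hk' hp (by rw [mem_numerQuotIdx] at hp; omega)
      rw [show (2 * c + 1) / 2 = c by omega]
      push_cast at this
      exact this
    · have := le_numerRoot_of_isRoot hk' hkc hk12 rfl (by omega) (by omega) hRD hp hz
      rw [show (2 * c + 1 + 1) / 2 = c + 1 by omega]
      push_cast at this ⊢
      linarith
  · simpa [diagQuot, numerQuot, numerQuotIdx_eq_empty hk' h2, diagQuotIdx_eq_empty hk' h2]
      using hRD
  · have hkm1 := eq_zero_of_phi1_eq_zero hk' (by omega) (by omega) hφ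
    have := phi1_le (r₂ := r₂) (a := m) k hm (lt_add_one m) (by omega) (by omega)
    exact rootMultiplicity_numer1_denom1 hd hk' hm (by omega) (by omega) hkm1

/-- Proposition 6.4(2): location of the zeros of `(λ)_{φ₁(k),d}·C₁^{d,d/2}(λ,k)`,
and the poles/nonvanishing of `C₁^{d,d/2}` at `λ = dm/2`, `d(m−1)/2`. -/
theorem zeroes_simple₁ (d r₂ : ℕ) (hd : 0 < d) (hr₂ : 0 < r₂)
    (k : ℕ → ℕ) (hk : ∀ i j, 1 ≤ i → i ≤ j → j ≤ r₂ → k j ≤ k i)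
    (hk0 : k (r₂ + 1) = 0)
    (m₁ m₂ : ℕ) (hm1 : 2 ≤ m₁) (hm2 : m₁ ≤ m₂) (hm3 : m₂ ≤ r₂)
    (hkc : ∀ a, 2 ≤ a → a ≤ m₁ → k a = k 2) (hk2 : k (m₂ + 1) = 0)
    (R : Polynomial ℂ)
    (hR : R * denom1 d r₂ k = phiPoly1 d r₂ k * numer1 d r₂ k) :
    ((k 2 < k 1 → 0 < k 2 → ∀ z : ℂ, R.IsRoot z → z.im = 0 ∧
        (d : ℝ) / 4 * ((m₁ : ℝ) - 1) - ((k 1 : ℝ) + (k 2 : ℝ)) + 1 ≤ z.re ∧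
        z.re ≤ (d : ℝ) / 4 * (2 * (m₂ : ℝ) - 3) - (k (m₂ - 1) : ℝ)) ∧
      (k 1 = k 2 → 0 < k 2 → ∀ z : ℂ, R.IsRoot z → z.im = 0 ∧
        (d : ℝ) / 4 * (2 * (((m₁ + 1) / 2 : ℕ) : ℝ) - 1) - ((k 1 : ℝ) + (k 2 : ℝ)) + 1 ≤ z.re ∧
        z.re ≤ (d : ℝ) / 4 * (2 * (m₂ : ℝ) - 3) - (k (m₂ - 1) : ℝ)) ∧
      (k 2 = 0 → R = 1)) ∧
    ∀ m : ℕ, 1 ≤ m → m ≤ r₂ - 1 →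
      phi1 r₂ k (m + 1) = 0 → phi1 r₂ k m ≠ 0 →
      (Polynomial.rootMultiplicity ((d : ℂ) * (m : ℂ) / 2) (numer1 d r₂ k) =
        Polynomial.rootMultiplicity ((d : ℂ) * (m : ℂ) / 2) (denom1 d r₂ k) ∧
       Polynomial.rootMultiplicity ((d : ℂ) * ((m : ℂ) - 1) / 2) (numer1 d r₂ k) <
        Polynomial.rootMultiplicity ((d : ℂ) * ((m : ℂ) - 1) / 2) (denom1 d r₂ k)) :=
  zeroes_simple₁_general d r₂ hd k hk hk0 m₁ m₂ hm1 hm2 hm3 hkc hk2 R hR
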